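/- arXiv:2506.15288 — 5 statements merged into one kernel-verified Lean document; each statement's English description precedes it below -/
import Mathlib

section
/- Let H be a real Hilbert space, L : H →L[ℝ] H bounded self-adjoint with ⟪L x, x⟫ ≤ -γ‖x‖² for all x (γ > 0), and Q : H →L[ℝ] H a bounded operator. Then the operator-valued function t ↦ exp(t • L) ∘ Q ∘ exp(t • L) is Bochner integrable on [0, ∞) in the Banach space of bounded operators on H, and the norm of its integral P = ∫₀^∞ exp(t • L) ∘ Q ∘ exp(t • L) dt satisfies ‖P‖ ≤ ‖Q‖ / (2 * γ). -/
open scoped InnerProductSpace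
open MeasureTheory

/-! Writing `u s = exp (s • L) x`, dissipativity makes `s ↦ exp (2γs) ‖u s‖²` nonincreasing (its
derivative is `2 exp (2γs) (γ‖u s‖² + ⟪L (u s), u s⟫) ≤ 0`), so `‖exp (t • L)‖ ≤ exp (-γt)` for `t ≥ 0`. The integrand is
then continuous and bounded by `‖Q‖ exp (-2γt)`, whose integral over `(0, ∞)` is `‖Q‖ / (2γ)`. -/

theorem integrableOn_Ioi_of_norm_le_mul_exp {E : Type*} [NormedAddCommGroup E] {f : ℝ → E}
    (hf : AEStronglyMeasurable f (volume.restrict (Set.Ioi 0))) {C b : ℝ} (hb : 0 < b)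
    (hle : ∀ t ∈ Set.Ioi (0 : ℝ), ‖f t‖ ≤ C * Real.exp (-b * t)) :
    IntegrableOn f (Set.Ioi 0) :=
  ((integrableOn_exp_mul_Ioi (neg_neg_of_pos hb) 0).const_mul C).mono' hf <|
    (ae_restrict_mem measurableSet_Ioi).mono hle

theorem norm_integral_Ioi_le_of_norm_le_mul_exp {E : Type*} [NormedAddCommGroup E]
    [NormedSpace ℝ E] {f : ℝ → E} {C b : ℝ} (hb : 0 < b)
    (hle : ∀ t ∈ Set.Ioi (0 : ℝ), ‖f t‖ ≤ C * Real.exp (-b * t)) :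
    ‖∫ t in Set.Ioi (0 : ℝ), f t‖ ≤ C / b := by
  have hint := (integrableOn_exp_mul_Ioi (neg_neg_of_pos hb) 0).const_mul C
  calc ‖∫ t in Set.Ioi (0 : ℝ), f t‖ ≤ ∫ t in Set.Ioi (0 : ℝ), C * Real.exp (-b * t) :=
        norm_integral_le_of_norm_le hint ((ae_restrict_mem measurableSet_Ioi).mono hle)
    _ = C / b := by
        rw [integral_const_mul, integral_exp_mul_Ioi (neg_neg_of_pos hb)]
        simp [div_eq_mul_inv]

section DissipativeExp

variable {H : Type*} [NormedAddCommGroup H] [InnerProductSpace ℝ H] [CompleteSpace H]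
  (L : H →L[ℝ] H)

theorem hasDerivAt_exp_smul_apply (x : H) (s : ℝ) :
    HasDerivAt (fun s : ℝ => NormedSpace.exp (s • L) x) (L (NormedSpace.exp (s • L) x)) s := by
  simpa using (hasDerivAt_exp_smul_const' L s).clm_apply (hasDerivAt_const s x)

theorem continuous_exp_smul : Continuous fun t : ℝ => NormedSpace.exp (t • L) :=
  continuous_iff_continuousAt.2 fun t => (hasDerivAt_exp_smul_const' L t).continuousAt

variable {L} {γ : ℝ}

theorem antitone_exp_mul_norm_sq_exp_smul_apply
    (hdiss : ∀ x : H, ⟪L x, x⟫_ℝ ≤ -γ * ‖x‖ ^ 2) (x : H) :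
    Antitone fun s : ℝ => Real.exp (2 * γ * s) * ‖NormedSpace.exp (s • L) x‖ ^ 2 := by
  set u : ℝ → H := fun s => NormedSpace.exp (s • L) x
  have hderiv (s : ℝ) : HasDerivAt (fun s => Real.exp (2 * γ * s) * ‖u s‖ ^ 2)
      (Real.exp (2 * γ * s) * (2 * γ) * ‖u s‖ ^ 2 +
        Real.exp (2 * γ * s) * (2 * ⟪u s, L (u s)⟫_ℝ)) s := by
    have hexp := ((hasDerivAt_id s).const_mul (2 * γ)).exp
    simp only [id, mul_one] at hexp
    exact hexp.mul (hasDerivAt_exp_smul_apply L x s).norm_sq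
  refine antitone_of_deriv_nonpos (fun s => (hderiv s).differentiableAt) fun s => ?_
  rw [(hderiv s).deriv, real_inner_comm]
  have := mul_le_mul_of_nonneg_left (hdiss (u s)) (Real.exp_pos (2 * γ * s)).le
  nlinarith

theorem norm_exp_smul_apply_le (hdiss : ∀ x : H, ⟪L x, x⟫_ℝ ≤ -γ * ‖x‖ ^ 2)
    {t : ℝ} (ht : 0 ≤ t) (x : H) :
    ‖NormedSpace.exp (t • L) x‖ ≤ Real.exp (-γ * t) * ‖x‖ := by
  have hmono := antitone_exp_mul_norm_sq_exp_smul_apply hdiss x ht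
  simp only [mul_zero, Real.exp_zero, zero_smul, NormedSpace.exp_zero, one_mul,
    one_apply_eq_self] at hmono
  refine pow_le_pow_iff_left₀ (norm_nonneg _) (by positivity) two_ne_zero |>.mp ?_
  calc ‖NormedSpace.exp (t • L) x‖ ^ 2
      = Real.exp (-γ * t) ^ 2 * (Real.exp (2 * γ * t) * ‖NormedSpace.exp (t • L) x‖ ^ 2) := by
        rw [← mul_assoc, ← Real.exp_nat_mul, ← Real.exp_add,
          show ((2 : ℕ) : ℝ) * (-γ * t) + 2 * γ * t = 0 by push_cast; ring, Real.exp_zero, one_mul]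
    _ ≤ (Real.exp (-γ * t) * ‖x‖) ^ 2 := by
        rw [mul_pow]
        gcongr

theorem norm_exp_smul_le (hdiss : ∀ x : H, ⟪L x, x⟫_ℝ ≤ -γ * ‖x‖ ^ 2)
    {t : ℝ} (ht : 0 ≤ t) : ‖NormedSpace.exp (t • L)‖ ≤ Real.exp (-γ * t) :=
  ContinuousLinearMap.opNorm_le_bound _ (Real.exp_nonneg _) (norm_exp_smul_apply_le hdiss ht)

theorem norm_exp_smul_comp_comp_exp_smul_le (hdiss : ∀ x : H, ⟪L x, x⟫_ℝ ≤ -γ * ‖x‖ ^ 2)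
    (Q : H →L[ℝ] H) {t : ℝ} (ht : 0 ≤ t) :
    ‖NormedSpace.exp (t • L) ∘L Q ∘L NormedSpace.exp (t • L)‖ ≤
      ‖Q‖ * Real.exp (-(2 * γ) * t) := by
  have hexp := norm_exp_smul_le hdiss ht
  calc ‖NormedSpace.exp (t • L) ∘L Q ∘L NormedSpace.exp (t • L)‖
      ≤ ‖NormedSpace.exp (t • L)‖ * (‖Q‖ * ‖NormedSpace.exp (t • L)‖) :=
        (ContinuousLinearMap.opNorm_comp_le _ _).trans <|
          mul_le_mul_of_nonneg_left (ContinuousLinearMap.opNorm_comp_le _ _) (norm_nonneg _)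
    _ ≤ Real.exp (-γ * t) * (‖Q‖ * Real.exp (-γ * t)) := by gcongr
    _ = ‖Q‖ * Real.exp (-(2 * γ) * t) := by
        rw [mul_left_comm, ← Real.exp_add]
        ring_nf

end DissipativeExp

theorem energy_covariance_bochner_integrable_general
    {H : Type*} [NormedAddCommGroup H] [InnerProductSpace ℝ H] [CompleteSpace H]
    (L : H →L[ℝ] H) (γ : ℝ) (hγ : 0 < γ)
    (hdiss : ∀ x : H, ⟪L x, x⟫_ℝ ≤ -γ * ‖x‖ ^ 2)
    (Q : H →L[ℝ] H) :
    IntegrableOn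
      (fun t : ℝ => NormedSpace.exp (t • L) ∘L Q ∘L NormedSpace.exp (t • L))
      (Set.Ioi 0) ∧
    ‖∫ t in Set.Ioi (0 : ℝ),
        NormedSpace.exp (t • L) ∘L Q ∘L NormedSpace.exp (t • L)‖
      ≤ ‖Q‖ / (2 * γ) := by
  have hcont : Continuous fun t : ℝ => NormedSpace.exp (t • L) ∘L Q ∘L NormedSpace.exp (t • L) :=
    ((continuous_exp_smul L).clm_comp continuous_const).clm_comp (continuous_exp_smul L)
  have hbound (t : ℝ) (ht : t ∈ Set.Ioi 0) :=
    norm_exp_smul_comp_comp_exp_smul_le hdiss Q (le_of_lt ht)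
  have hrate : 0 < 2 * γ := by positivity
  exact ⟨integrableOn_Ioi_of_norm_le_mul_exp hcont.aestronglyMeasurable hrate hbound,
    norm_integral_Ioi_le_of_norm_le_mul_exp hrate hbound⟩

theorem energy_covariance_bochner_integrable
    {H : Type*} [NormedAddCommGroup H] [InnerProductSpace ℝ H] [CompleteSpace H]
    (L : H →L[ℝ] H) (γ : ℝ) (hγ : 0 < γ)
    (hsa : ∀ x y : H, ⟪L x, y⟫_ℝ = ⟪x, L y⟫_ℝ)
    (hdiss : ∀ x : H, ⟪L x, x⟫_ℝ ≤ -γ * ‖x‖ ^ 2)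
    (Q : H →L[ℝ] H) :
    IntegrableOn
      (fun t : ℝ => NormedSpace.exp (t • L) ∘L Q ∘L NormedSpace.exp (t • L))
      (Set.Ioi 0) ∧
    ‖∫ t in Set.Ioi (0 : ℝ),
        NormedSpace.exp (t • L) ∘L Q ∘L NormedSpace.exp (t • L)‖
      ≤ ‖Q‖ / (2 * γ) :=
  energy_covariance_bochner_integrable_general L γ hγ hdiss Q
end

section
/- Let H be a real Hilbert space, L : H →L[ℝ] H bounded self-adjoint with ⟪L x, x⟫ ≤ -γ‖x‖² for all x (γ > 0), and Q : H →L[ℝ] H a bounded operator. Define P = ∫₀^∞ exp(t • L) ∘ Q ∘ exp(t • L) dt. Then P satisfies the operator Lyapunov (energy balance) equation L ∘ P + P ∘ L = -Q. -/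
/-!
Put `F t = exp (t • L) * Q * exp (t • L)`, so that `F' = L * F + F * L` and `F 0 = Q`.
Dissipativity makes `‖exp (t • L) x‖ ^ 2` satisfy the differential inequality `f' ≤ -2γ f`, so by
Grönwall `‖exp (t • L)‖ ≤ exp (-γ t)` and `F` decays exponentially. Integrating `F'` over `(0, ∞)`
then gives `L * P + P * L = lim F - F 0 = -Q`.
-/

open scoped InnerProductSpace
open MeasureTheory

open Asymptotics Filter Set Topology NormedSpace

section BanachAlgebra

variable {𝔸 : Type*} [NormedRing 𝔸] [NormedAlgebra ℝ 𝔸]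

theorem isBigO_exp_smul_mul_mul_exp_smul {A B : 𝔸} {a b : ℝ} (Q : 𝔸)
    (hA : (fun t : ℝ => exp (t • A)) =O[atTop] fun t => Real.exp (-a * t))
    (hB : (fun t : ℝ => exp (t • B)) =O[atTop] fun t => Real.exp (-b * t)) :
    (fun t : ℝ => exp (t • A) * Q * exp (t • B)) =O[atTop] fun t => Real.exp (-(a + b) * t) := by
  refine ((hA.mul (isBigO_const_one ℝ Q atTop)).mul hB).congr_right fun t => ?_
  rw [mul_one, ← Real.exp_add]
  ring_nf

variable [CompleteSpace 𝔸]

theorem hasDerivAt_exp_smul_mul_mul_exp_smul (A B Q : 𝔸) (t : ℝ) :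
    HasDerivAt (fun s : ℝ => exp (s • A) * Q * exp (s • B))
      (A * (exp (t • A) * Q * exp (t • B)) + exp (t • A) * Q * exp (t • B) * B) t := by
  refine (((hasDerivAt_exp_smul_const' A t).mul_const Q).mul
    (hasDerivAt_exp_smul_const B t)).congr_deriv ?_
  simp only [mul_assoc]

theorem mul_integral_exp_smul_add_integral_exp_smul_mul {A B : 𝔸} {a b : ℝ} (Q : 𝔸)
    (hab : 0 < a + b)
    (hA : (fun t : ℝ => exp (t • A)) =O[atTop] fun t => Real.exp (-a * t))
    (hB : (fun t : ℝ => exp (t • B)) =O[atTop] fun t => Real.exp (-b * t)) :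
    A * (∫ t in Ioi (0 : ℝ), exp (t • A) * Q * exp (t • B)) +
      (∫ t in Ioi (0 : ℝ), exp (t • A) * Q * exp (t • B)) * B = -Q := by
  set F : ℝ → 𝔸 := fun t => exp (t • A) * Q * exp (t • B)
  have hF' := hasDerivAt_exp_smul_mul_mul_exp_smul A B Q
  have hdecay := isBigO_exp_smul_mul_mul_exp_smul Q hA hB
  have hFc : Continuous F := continuous_iff_continuousAt.2 fun t => (hF' t).continuousAt
  have hint : IntegrableOn F (Ioi 0) :=
    ((hFc.locallyIntegrable.locallyIntegrableOn (Ici 0)).integrableOn_of_isBigO_atTop hdecay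
      ⟨Ioi 0, Ioi_mem_atTop 0, exp_neg_integrableOn_Ioi 0 hab⟩).mono_set Ioi_subset_Ici_self
  have hlim : Tendsto F atTop (𝓝 0) := hdecay.trans_tendsto <|
    Real.tendsto_exp_atBot.comp (tendsto_id.const_mul_atTop_of_neg (neg_neg_of_pos hab))
  have hmulLeft := (ContinuousLinearMap.mul ℝ 𝔸 A).integral_comp_comm hint
  have hmulRight := ((ContinuousLinearMap.mul ℝ 𝔸).flip B).integral_comp_comm hint
  simp only [ContinuousLinearMap.mul_apply', ContinuousLinearMap.flip_apply] at hmulLeft hmulRight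
  have hFTC : ∫ t in Ioi (0 : ℝ), (A * F t + F t * B) = 0 - F 0 :=
    integral_Ioi_of_hasDerivAt_of_tendsto' (fun t _ => hF' t)
      ((hint.const_mul A).add (hint.mul_const B)) hlim
  rw [← hmulLeft, ← hmulRight, ← integral_add (hint.const_mul A) (hint.mul_const B), hFTC]
  simp only [F, zero_smul, exp_zero, one_mul, mul_one, zero_sub]

end BanachAlgebra

section Dissipative

variable {H : Type*} [NormedAddCommGroup H] [InnerProductSpace ℝ H] [CompleteSpace H]
  {L : H →L[ℝ] H} {γ : ℝ}

theorem norm_exp_smul_apply_le_of_inner_le (hdiss : ∀ x : H, ⟪L x, x⟫_ℝ ≤ -γ * ‖x‖ ^ 2)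
    {t : ℝ} (ht : 0 ≤ t) (x : H) : ‖exp (t • L) x‖ ≤ Real.exp (-γ * t) * ‖x‖ := by
  set u : ℝ → H := fun s => exp (s • L) x
  have hu : ∀ s, HasDerivAt u (L (u s)) s := fun s => by
    simpa using (hasDerivAt_exp_smul_const' L s).clm_apply (hasDerivAt_const s x)
  have hsq : ∀ s, HasDerivAt (fun s => ‖u s‖ ^ 2) (2 * ⟪u s, L (u s)⟫_ℝ) s :=
    fun s => (hu s).norm_sq
  have hgronwall := le_gronwallBound_of_liminf_deriv_right_le (a := 0) (b := t)
    (δ := ‖x‖ ^ 2) (K := -2 * γ) (ε := 0)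
    (continuous_iff_continuousAt.2 fun s => (hsq s).continuousAt).continuousOn
    (fun s _ r hr => by
      simpa only [slope, vsub_eq_sub, smul_eq_mul] using
        (hsq s).hasDerivWithinAt.liminf_right_slope_le hr)
    (by simp [u]) (fun s _ => by rw [real_inner_comm]; linarith [hdiss (u s)])
    t ⟨ht, le_rfl⟩
  rw [gronwallBound_ε0, sub_zero] at hgronwall
  refine (pow_le_pow_iff_left₀ (norm_nonneg _) (by positivity) two_ne_zero).1 ?_
  calc ‖u t‖ ^ 2 ≤ ‖x‖ ^ 2 * Real.exp (-2 * γ * t) := hgronwall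
    _ = (Real.exp (-γ * t) * ‖x‖) ^ 2 := by
      rw [mul_pow, ← Real.exp_nat_mul]; ring_nf

theorem norm_exp_smul_le_of_inner_le (hdiss : ∀ x : H, ⟪L x, x⟫_ℝ ≤ -γ * ‖x‖ ^ 2)
    {t : ℝ} (ht : 0 ≤ t) : ‖exp (t • L)‖ ≤ Real.exp (-γ * t) :=
  ContinuousLinearMap.opNorm_le_bound _ (Real.exp_pos _).le
    (norm_exp_smul_apply_le_of_inner_le hdiss ht)

theorem isBigO_exp_smul_of_inner_le (hdiss : ∀ x : H, ⟪L x, x⟫_ℝ ≤ -γ * ‖x‖ ^ 2) :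
    (fun t : ℝ => exp (t • L)) =O[atTop] fun t => Real.exp (-γ * t) :=
  IsBigO.of_bound 1 <| (eventually_ge_atTop 0).mono fun t ht => by
    rw [one_mul, Real.norm_of_nonneg (Real.exp_pos _).le]
    exact norm_exp_smul_le_of_inner_le hdiss ht

end Dissipative

theorem energy_covariance_lyapunov_general
    {H : Type*} [NormedAddCommGroup H] [InnerProductSpace ℝ H] [CompleteSpace H]
    (L : H →L[ℝ] H) (γ : ℝ) (hγ : 0 < γ)
    (hdiss : ∀ x : H, ⟪L x, x⟫_ℝ ≤ -γ * ‖x‖ ^ 2)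
    (Q : H →L[ℝ] H)
    (P : H →L[ℝ] H)
    (hP : P = ∫ t in Set.Ioi (0 : ℝ),
        NormedSpace.exp (t • L) ∘L Q ∘L NormedSpace.exp (t • L)) :
    L ∘L P + P ∘L L = -Q := by
  subst hP
  exact mul_integral_exp_smul_add_integral_exp_smul_mul Q (by linarith)
    (isBigO_exp_smul_of_inner_le hdiss) (isBigO_exp_smul_of_inner_le hdiss)

theorem energy_covariance_lyapunov
    {H : Type*} [NormedAddCommGroup H] [InnerProductSpace ℝ H] [CompleteSpace H]
    (L : H →L[ℝ] H) (γ : ℝ) (hγ : 0 < γ)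
    (hsa : ∀ x y : H, ⟪L x, y⟫_ℝ = ⟪x, L y⟫_ℝ)
    (hdiss : ∀ x : H, ⟪L x, x⟫_ℝ ≤ -γ * ‖x‖ ^ 2)
    (Q : H →L[ℝ] H)
    (P : H →L[ℝ] H)
    (hP : P = ∫ t in Set.Ioi (0 : ℝ),
        NormedSpace.exp (t • L) ∘L Q ∘L NormedSpace.exp (t • L)) :
    L ∘L P + P ∘L L = -Q :=
  energy_covariance_lyapunov_general L γ hγ hdiss Q P hP
end

section
/- Let H be a real Hilbert space, L : H →L[ℝ] H bounded self-adjoint with ⟪L x, x⟫ ≤ -γ‖x‖² for all x (γ > 0), and Q : H →L[ℝ] H a bounded operator. Suppose φ_j and φ_m are eigenvectors of L with L φ_j = λ_j • φ_j and L φ_m = λ_m • φ_m, where λ_j, λ_m < 0. Then the energy covariance operator P = ∫₀^∞ exp(t • L) ∘ Q ∘ exp(t • L) dt satisfies ⟪φ_j, P φ_m⟫ = ⟪φ_j, Q φ_m⟫ / (-(λ_j + λ_m)). -/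
/-!
On an eigenvector `φ` of `L` with eigenvalue `λ`, `exp (t • L)` acts as multiplication by `e^{λt}`,
and `exp (t • L)` is self-adjoint, so the `(φj, φm)` entry of the integrand is
`e^{(λj + λm) t} ⟪φj, Q φm⟫`, which integrates to `⟪φj, Q φm⟫ / (-(λj + λm))`.
Dissipativity gives `‖exp (t • L)‖ ≤ e^{-γt}`, so the operator-valued integral converges and
taking an entry commutes with it.
-/

open scoped InnerProductSpace
open MeasureTheory Set

namespace ContinuousLinearMap

section NormedSpace

variable {E : Type*} [NormedAddCommGroup E] [NormedSpace ℝ E] [CompleteSpace E]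

theorem exp_apply_of_apply_eq_smul {A : E →L[ℝ] E} {φ : E} {μ : ℝ} (h : A φ = μ • φ) :
    NormedSpace.exp A φ = Real.exp μ • φ := by
  have hpow (n : ℕ) : (A ^ n) φ = μ ^ n • φ := by
    induction n with
    | zero => simp
    | succ n ih => rw [pow_succ', mul_apply_eq_comp, ih, map_smul, h, smul_smul, pow_succ]
  calc NormedSpace.exp A φ = ∑' n : ℕ, (n.factorial⁻¹ : ℝ) • (A ^ n) φ := by
        rw [NormedSpace.exp_eq_tsum ℝ]
        exact (apply ℝ E φ).map_tsum (NormedSpace.expSeries_summable' A)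
    _ = (∑' n : ℕ, (n.factorial⁻¹ : ℝ) • μ ^ n) • φ := by
        rw [← (NormedSpace.expSeries_summable' μ).tsum_smul_const]
        simp only [hpow, smul_smul, smul_eq_mul]
    _ = Real.exp μ • φ := by rw [Real.exp_eq_exp_ℝ, NormedSpace.exp_eq_tsum ℝ]

theorem exp_smul_apply_of_apply_eq_smul {A : E →L[ℝ] E} {φ : E} {μ : ℝ} (h : A φ = μ • φ)
    (t : ℝ) : NormedSpace.exp (t • A) φ = Real.exp (μ * t) • φ :=
  exp_apply_of_apply_eq_smul (by rw [smul_apply, h, smul_smul, mul_comm])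

theorem hasDerivAt_exp_smul_apply (A : E →L[ℝ] E) (x : E) (t : ℝ) :
    HasDerivAt (fun s : ℝ => NormedSpace.exp (s • A) x) (A (NormedSpace.exp (t • A) x)) t := by
  simpa using (hasDerivAt_exp_smul_const' A t).clm_apply (hasDerivAt_const t x)

end NormedSpace

section InnerProductSpace

variable {H : Type*} [NormedAddCommGroup H] [InnerProductSpace ℝ H] [CompleteSpace H]

/-- `exp (2γs) ‖exp (s • L) x‖²` is antitone, its derivative being
`2 exp (2γs) (γ ‖u‖² + ⟪L u, u⟫) ≤ 0` with `u = exp (s • L) x`. -/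
theorem norm_exp_smul_apply_le {L : H →L[ℝ] H} {γ : ℝ} (hL : ∀ x, ⟪L x, x⟫_ℝ ≤ -γ * ‖x‖ ^ 2)
    {t : ℝ} (ht : 0 ≤ t) (x : H) :
    ‖NormedSpace.exp (t • L) x‖ ≤ Real.exp (-γ * t) * ‖x‖ := by
  set u := fun s : ℝ => NormedSpace.exp (s • L) x
  have hderiv (s : ℝ) : HasDerivAt (fun s => Real.exp (2 * γ * s) * ‖u s‖ ^ 2)
      (Real.exp (2 * γ * s) * (2 * γ) * ‖u s‖ ^ 2 +
        Real.exp (2 * γ * s) * (2 * ⟪u s, L (u s)⟫_ℝ)) s := by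
    have hexp : HasDerivAt (fun s => Real.exp (2 * γ * s)) (Real.exp (2 * γ * s) * (2 * γ)) s :=
      by simpa using ((hasDerivAt_id s).const_mul (2 * γ)).exp
    exact hexp.mul (hasDerivAt_exp_smul_apply L x s).norm_sq
  have hanti := antitone_of_hasDerivAt_nonpos hderiv fun s => by
    have hdiss := hL (u s)
    rw [real_inner_comm] at hdiss
    rw [Pi.zero_apply]
    nlinarith [mul_le_mul_of_nonneg_left hdiss (Real.exp_pos (2 * γ * s)).le]
  have hsq : (Real.exp (γ * t) * ‖u t‖) ^ 2 ≤ ‖x‖ ^ 2 :=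
    calc (Real.exp (γ * t) * ‖u t‖) ^ 2 = Real.exp (2 * γ * t) * ‖u t‖ ^ 2 := by
          rw [mul_pow, ← Real.exp_nat_mul]
          ring_nf
      _ ≤ Real.exp (2 * γ * 0) * ‖u 0‖ ^ 2 := hanti ht
      _ = ‖x‖ ^ 2 := by simp [u]
  rw [neg_mul, Real.exp_neg, inv_mul_eq_div, le_div_iff₀' (Real.exp_pos _)]
  exact (pow_le_pow_iff_left₀ (by positivity) (norm_nonneg x) two_ne_zero).1 hsq

theorem norm_exp_smul_le {L : H →L[ℝ] H} {γ : ℝ} (hL : ∀ x, ⟪L x, x⟫_ℝ ≤ -γ * ‖x‖ ^ 2)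
    {t : ℝ} (ht : 0 ≤ t) : ‖NormedSpace.exp (t • L)‖ ≤ Real.exp (-γ * t) :=
  opNorm_le_bound _ (Real.exp_nonneg _) (norm_exp_smul_apply_le hL ht)

theorem integrableOn_exp_smul_comp_comp_exp_smul {L : H →L[ℝ] H} {γ : ℝ} (hγ : 0 < γ)
    (hL : ∀ x, ⟪L x, x⟫_ℝ ≤ -γ * ‖x‖ ^ 2) (Q : H →L[ℝ] H) :
    IntegrableOn (fun t : ℝ => NormedSpace.exp (t • L) ∘L Q ∘L NormedSpace.exp (t • L))
      (Ioi 0) := by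
  have hcont : Continuous fun t : ℝ => NormedSpace.exp (t • L) :=
    (differentiable_exp_smul_const ℝ L).continuous
  refine Integrable.mono' ((integrableOn_exp_mul_Ioi (by linarith : -γ + -γ < 0) 0).const_mul ‖Q‖)
    (hcont.clm_comp (continuous_const.clm_comp hcont)).aestronglyMeasurable ?_
  filter_upwards [ae_restrict_mem measurableSet_Ioi] with t ht
  have hexp := norm_exp_smul_le hL (le_of_lt ht)
  calc ‖NormedSpace.exp (t • L) ∘L Q ∘L NormedSpace.exp (t • L)‖
      ≤ ‖NormedSpace.exp (t • L)‖ * (‖Q‖ * ‖NormedSpace.exp (t • L)‖) :=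
        (opNorm_comp_le _ _).trans (by gcongr; exact opNorm_comp_le _ _)
    _ ≤ Real.exp (-γ * t) * (‖Q‖ * Real.exp (-γ * t)) := by gcongr
    _ = ‖Q‖ * Real.exp ((-γ + -γ) * t) := by rw [add_mul, Real.exp_add]; ring

theorem inner_exp_smul_comp_comp_exp_smul_apply {L : H →L[ℝ] H} (hL : IsSelfAdjoint L)
    (Q : H →L[ℝ] H) {φ ψ : H} {μ ν : ℝ} (hφ : L φ = μ • φ) (hψ : L ψ = ν • ψ) (t : ℝ) :
    ⟪φ, (NormedSpace.exp (t • L) ∘L Q ∘L NormedSpace.exp (t • L)) ψ⟫_ℝ =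
      Real.exp ((μ + ν) * t) * ⟪φ, Q ψ⟫_ℝ := by
  have hsymm : ∀ x y, ⟪NormedSpace.exp (t • L) x, y⟫_ℝ = ⟪x, NormedSpace.exp (t • L) y⟫_ℝ :=
    ((IsSelfAdjoint.all t).smul hL).exp.isSymmetric
  rw [comp_apply, comp_apply, ← hsymm, exp_smul_apply_of_apply_eq_smul hφ,
    exp_smul_apply_of_apply_eq_smul hψ, map_smul, real_inner_smul_left, real_inner_smul_right,
    add_mul, Real.exp_add, mul_assoc]

theorem inner_integral_apply {E α : Type*} [NormedAddCommGroup E] [NormedSpace ℝ E]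
    [MeasurableSpace α] {μ : Measure α} {f : α → E →L[ℝ] H} (hf : Integrable f μ) (x : H) (y : E) :
    ⟪x, (∫ a, f a ∂μ) y⟫_ℝ = ∫ a, ⟪x, f a y⟫_ℝ ∂μ :=
  (((innerSL ℝ x).comp (apply ℝ H y)).integral_comp_comm hf).symm

end InnerProductSpace

end ContinuousLinearMap

open ContinuousLinearMap in
theorem energy_covariance_eigenvector_entries
    {H : Type*} [NormedAddCommGroup H] [InnerProductSpace ℝ H] [CompleteSpace H]
    (L : H →L[ℝ] H) (γ : ℝ) (hγ : 0 < γ)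
    (hsa : ∀ x y : H, ⟪L x, y⟫_ℝ = ⟪x, L y⟫_ℝ)
    (hdiss : ∀ x : H, ⟪L x, x⟫_ℝ ≤ -γ * ‖x‖ ^ 2)
    (Q : H →L[ℝ] H)
    (φj φm : H) (lamj lamm : ℝ)
    (hj : L φj = lamj • φj) (hm : L φm = lamm • φm)
    (hjneg : lamj < 0) (hmneg : lamm < 0)
    (P : H →L[ℝ] H)
    (hP : P = ∫ t in Set.Ioi (0 : ℝ),
        NormedSpace.exp (t • L) ∘L Q ∘L NormedSpace.exp (t • L)) :
    ⟪φj, P φm⟫_ℝ = ⟪φj, Q φm⟫_ℝ / (-(lamj + lamm)) := by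
  have hL : IsSelfAdjoint L := isSelfAdjoint_iff_isSymmetric.mpr hsa
  rw [hP, inner_integral_apply (integrableOn_exp_smul_comp_comp_exp_smul hγ hdiss Q)]
  simp_rw [inner_exp_smul_comp_comp_exp_smul_apply hL Q hj hm]
  rw [integral_mul_const, integral_exp_mul_Ioi (by linarith) 0, mul_zero, Real.exp_zero, neg_div,
    div_neg]
  ring
end

section
/- Let N be a positive natural number, λ : Fin N → ℝ with λ k < 0 for all k, let Λ = Matrix.diagonal λ, and let Q be a real N × N matrix. Then the entrywise integral of the matrix-valued function t ↦ exp(t • Λ) * Q * exp(t • Λ) over [0, ∞) exists, and its (j, k) entry equals Q j k / (-(λ j + λ k)). -/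
open MeasureTheory

/-
Since `Λ` is diagonal, so is `exp (t • Λ) = diagonal (fun i ↦ exp (t λ i))`, and the `(j, k)` entry of
`exp (t • Λ) * Q * exp (t • Λ)` is `Q j k * exp ((λ j + λ k) t)`. As `c = λ j + λ k < 0`, this is
integrable on `(0, ∞)`, and `∫₀^∞ exp (c t) dt = -1 / c`.
-/

namespace Matrix

variable {m n : Type*} [Fintype m] [DecidableEq m] [Fintype n] [DecidableEq n]

theorem exp_smul_diagonal (t : ℝ) (d : n → ℝ) :
    NormedSpace.exp (t • diagonal d) = diagonal fun i => Real.exp (t * d i) := by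
  rw [← diagonal_smul, exp_diagonal, Pi.exp_def, Real.exp_eq_exp_ℝ]
  rfl

theorem exp_smul_diagonal_mul_mul_exp_smul_diagonal_apply (t : ℝ) (a : m → ℝ) (b : n → ℝ)
    (Q : Matrix m n ℝ) (j : m) (k : n) :
    (NormedSpace.exp (t • diagonal a) * Q * NormedSpace.exp (t • diagonal b)) j k =
      Q j k * Real.exp ((a j + b k) * t) := by
  rw [exp_smul_diagonal, exp_smul_diagonal, mul_diagonal, diagonal_mul, add_mul, Real.exp_add]
  ring_nf

end Matrix

theorem diagonal_lyapunov_integral_entries_general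
    (N : ℕ) (lam : Fin N → ℝ) (hlam : ∀ k, lam k < 0)
    (Q : Matrix (Fin N) (Fin N) ℝ) :
    ∀ j k : Fin N,
      IntegrableOn
        (fun t : ℝ =>
          (NormedSpace.exp (t • Matrix.diagonal lam) * Q *
            NormedSpace.exp (t • Matrix.diagonal lam)) j k)
        (Set.Ioi 0) ∧
      (∫ t in Set.Ioi (0 : ℝ),
          (NormedSpace.exp (t • Matrix.diagonal lam) * Q *
            NormedSpace.exp (t • Matrix.diagonal lam)) j k)
        = Q j k / (-(lam j + lam k)) := by
  intro j k
  have hsum : lam j + lam k < 0 := add_neg (hlam j) (hlam k)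
  simp_rw [Matrix.exp_smul_diagonal_mul_mul_exp_smul_diagonal_apply]
  refine ⟨(integrableOn_exp_mul_Ioi hsum 0).const_mul _, ?_⟩
  rw [integral_const_mul, integral_exp_mul_Ioi hsum 0, mul_zero, Real.exp_zero, div_neg, neg_div,
    mul_neg, mul_one_div]

theorem diagonal_lyapunov_integral_entries
    (N : ℕ) (hN : 0 < N) (lam : Fin N → ℝ) (hlam : ∀ k, lam k < 0)
    (Q : Matrix (Fin N) (Fin N) ℝ) :
    ∀ j k : Fin N,
      IntegrableOn
        (fun t : ℝ =>
          (NormedSpace.exp (t • Matrix.diagonal lam) * Q *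
            NormedSpace.exp (t • Matrix.diagonal lam)) j k)
        (Set.Ioi 0) ∧
      (∫ t in Set.Ioi (0 : ℝ),
          (NormedSpace.exp (t • Matrix.diagonal lam) * Q *
            NormedSpace.exp (t • Matrix.diagonal lam)) j k)
        = Q j k / (-(lam j + lam k)) :=
  diagonal_lyapunov_integral_entries_general N lam hlam Q
end

section
/- Let N be a positive natural number, λ : Fin N → ℝ with λ k < 0 for all k, and let Q be a real symmetric positive semidefinite N × N matrix. Then the matrix P with entries P j k = Q j k / (-(λ j + λ k)) is symmetric positive semidefinite. -/
/-!
With `a = -lam > 0`, `P` is the Hadamard product of `Q` with the Cauchy-type matrix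
`C j k = (a j + a k)⁻¹`. Since `(a j + a k)⁻¹ = ∫₀^∞ e^{-a j t} e^{-a k t} dt`, `C` is the Gram
matrix of the functions `t ↦ e^{-a j t}` in `L²(0, ∞)`, hence positive semidefinite, and the
Schur product theorem gives the claim.
-/

open MeasureTheory Real Set
open scoped Matrix

theorem Matrix.posSemidef_integral_mul {ι α : Type*} [Finite ι] [MeasurableSpace α]
    {μ : Measure α} {f : ι → α → ℝ} (hf : ∀ i, MemLp (f i) 2 μ) :
    (Matrix.of fun i j => ∫ t, f i t * f j t ∂μ).PosSemidef := by
  have hgram : (Matrix.of fun i j => ∫ t, f i t * f j t ∂μ) =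
      gram ℝ fun i => (hf i).toLp (f i) := by
    ext i j
    rw [gram_apply, L2.inner_def, of_apply]
    refine integral_congr_ae ?_
    filter_upwards [(hf i).coeFn_toLp, (hf j).coeFn_toLp] with t hi hj
    rw [hi, hj, real_inner_eq_re_inner]
    simp [mul_comm]
  exact hgram ▸ posSemidef_gram ℝ _

theorem integral_exp_neg_mul_mul_exp_neg_mul {a b : ℝ} (h : 0 < a + b) :
    ∫ t in Ioi 0, exp (-a * t) * exp (-b * t) = (a + b)⁻¹ := by
  simp_rw [← exp_add, ← add_mul]
  rw [integral_exp_mul_Ioi (by linarith) 0, mul_zero, exp_zero, ← neg_add, neg_div_neg_eq,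
    one_div]

theorem memLp_two_exp_neg_mul {a : ℝ} (ha : 0 < a) :
    MemLp (fun t => exp (-a * t)) 2 (volume.restrict (Ioi 0)) := by
  refine (memLp_two_iff_integrable_sq (by fun_prop)).2 ?_
  change IntegrableOn _ (Ioi (0 : ℝ))
  simpa only [sq, ← exp_add, ← add_mul] using
    integrableOn_exp_mul_Ioi (a := -a + -a) (by linarith) 0

theorem Matrix.posSemidef_inv_add {ι : Type*} [Finite ι] {a : ι → ℝ} (ha : ∀ i, 0 < a i) :
    (Matrix.of fun i j => (a i + a j)⁻¹).PosSemidef := by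
  simpa only [integral_exp_neg_mul_mul_exp_neg_mul (add_pos (ha _) (ha _))] using
    posSemidef_integral_mul fun i => memLp_two_exp_neg_mul (ha i)

theorem lyapunov_solution_posSemidef_general
    (N : ℕ) (lam : Fin N → ℝ) (hlam : ∀ k, lam k < 0)
    (Q : Matrix (Fin N) (Fin N) ℝ) (hQ : Q.PosSemidef)
    (P : Matrix (Fin N) (Fin N) ℝ)
    (hP : ∀ j k : Fin N, P j k = Q j k / (-(lam j + lam k))) :
    P.PosSemidef := by
  have hP_hadamard : P = Q ⊙ Matrix.of fun j k => (-lam j + -lam k)⁻¹ := by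
    ext j k
    rw [hP, Matrix.hadamard_apply, Matrix.of_apply, neg_add, div_eq_mul_inv]
  exact hP_hadamard ▸ hQ.hadamard (Matrix.posSemidef_inv_add fun k => neg_pos.2 (hlam k))

theorem lyapunov_solution_posSemidef
    (N : ℕ) (hN : 0 < N) (lam : Fin N → ℝ) (hlam : ∀ k, lam k < 0)
    (Q : Matrix (Fin N) (Fin N) ℝ) (hQ : Q.PosSemidef)
    (P : Matrix (Fin N) (Fin N) ℝ)
    (hP : ∀ j k : Fin N, P j k = Q j k / (-(lam j + lam k))) :
    P.PosSemidef :=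
  lyapunov_solution_posSemidef_general N lam hlam Q hQ P hP
end
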